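/- Let B be a finite Garside shadow in (W,S) with M = max{ℓ(b) : b ∈ B}, let g ∈ W and s ∈ S with ℓ(sg) > ℓ(g), and suppose π_B(g⁻¹) ≠ π_B((sg)⁻¹). Then the wall of s is M-close to sg, i.e., at most M reflections separate sg from the wall of s. -/

import Mathlib

open CoxeterSystem

variable {ι W : Type} [Group W] {cm : CoxeterMatrix ι}

/-- The right weak order on `W`: `g ⪯ h` iff `ℓ(g) + ℓ(g⁻¹h) = ℓ(h)`. -/
def WLe (cs : CoxeterSystem cm W) (g h : W) : Prop :=
  cs.length g + cs.length (g⁻¹ * h) = cs.length h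

/-- `w` is a suffix of `g` if `g = u * w` with `ℓ(g) = ℓ(u) + ℓ(w)`. -/
def IsSuffixOf (cs : CoxeterSystem cm W) (w g : W) : Prop :=
  ∃ u : W, g = u * w ∧ cs.length g = cs.length u + cs.length w

/-- `j` is the join (least upper bound) of `X` with respect to the right weak order. -/
def IsJoin (cs : CoxeterSystem cm W) (X : Set W) (j : W) : Prop :=
  (∀ x ∈ X, WLe cs x j) ∧ ∀ u : W, (∀ x ∈ X, WLe cs x u) → WLe cs j u

/-- A Garside shadow: a subset of `W` containing all simple reflections, closed under
existing joins and under taking suffixes. -/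
def IsGarsideShadow (cs : CoxeterSystem cm W) (B : Set W) : Prop :=
  (∀ i : ι, cs.simple i ∈ B) ∧
  (∀ X : Set W, X ⊆ B → ∀ j : W, IsJoin cs X j → j ∈ B) ∧
  (∀ b ∈ B, ∀ w : W, IsSuffixOf cs w b → w ∈ B)

/-- `π` is the `B`-projection: `π g` is the join of `{b ∈ B : b ⪯ g}` and lies in `B`. -/
def IsGarsideProjection (cs : CoxeterSystem cm W) (B : Set W) (π : W → W) : Prop :=
  ∀ g : W, π g ∈ B ∧ IsJoin cs {b : W | b ∈ B ∧ WLe cs b g} (π g)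

/-- The voracious projection with respect to `π = π_B`: `ν_B(g) = g · π_B(g⁻¹)`. -/
def vor (π : W → W) (g : W) : W := g * π g⁻¹

/-- The language `L_g`, defined inductively: `L_id = {ε}` and
`L_g = {uv : u ∈ L_{ν_B(g)}, v a minimal length word representing ν_B(g)⁻¹g}`. -/
inductive VorL (cs : CoxeterSystem cm W) (π : W → W) : W → List ι → Prop
  | nil : VorL cs π 1 []
  | step {g : W} {u v : List ι} (hg : g ≠ 1) (hu : VorL cs π (vor π g) u)
      (hv : cs.wordProd v = (vor π g)⁻¹ * g)
      (hmin : v.length = cs.length ((vor π g)⁻¹ * g)) :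
      VorL cs π g (u ++ v)

/-- The voracious language `V_B = ⋃_{g ∈ W} L_g`. -/
def VorLang (cs : CoxeterSystem cm W) (π : W → W) : Language ι :=
  {v : List ι | ∃ g : W, VorL cs π g v}

/-- The reflection `r` separates `g` from `h`. -/
def SepElem (cs : CoxeterSystem cm W) (r g h : W) : Prop :=
  Xor' (cs.length (r * g) < cs.length g) (cs.length (r * h) < cs.length h)

/-- The reflection `r'` separates `g` from the wall of the reflection `r`. -/
def SepWall (cs : CoxeterSystem cm W) (r' g r : W) : Prop :=
  ∀ h : W, (∃ i : ι, r * h = h * cs.simple i) → SepElem cs r' g h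

/-- The wall of the reflection `r` is `m`-close to `g`: at most `m` reflections
separate `g` from the wall of `r`. -/
def MClose (cs : CoxeterSystem cm W) (m : ℕ) (g r : W) : Prop :=
  ∃ F : Finset W, F.card ≤ m ∧
    ∀ r' : W, cs.IsReflection r' → SepWall cs r' g r → r' ∈ F


/-!
Let `x = (sg)⁻¹`, `b = π_B(x)` and `t = g⁻¹sg`, so that `tx = g⁻¹ ⪯ x` and `ℓ(tx) + 1 = ℓ(x)`.
Since `π_B(g⁻¹) ≠ b`, we have `b ⋠ g⁻¹`. Write `x` as a reduced word for `b` followed by one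
for `b⁻¹x`. By strong exchange `t` occurs in the left inversion sequence of this word, and not in
the second half, since deleting a letter there would give `b ⪯ g⁻¹`. Hence `t = p sᵢ p⁻¹` with
`p` the product of a proper prefix of the word for `b`, so `sg·p` lies on the wall of `s`, and
every reflection separating `sg` from that wall is `(sg) r (sg)⁻¹` for a left inversion `r` of
`p`: there are at most `ℓ(p) < ℓ(b) ≤ M` of them.

Strong exchange is proved with the Tits cocycle: `W` acts on `W × {±1}` with `sᵢ` conjugating the
first factor and flipping the sign exactly at `sᵢ`.
-/

section FlipPerm

variable {G : Type*} [Group G]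

theorem conj_eq_iff_eq_conj_inv {c t x : G} : c * t * c⁻¹ = x ↔ t = c⁻¹ * x * c := by
  constructor <;> rintro rfl <;> group

variable [DecidableEq G]

def flipPerm (a : G) : Equiv.Perm (G × ℤˣ) where
  toFun p := (a * p.1 * a⁻¹, (if p.1 = a then -1 else 1) * p.2)
  invFun p := (a⁻¹ * p.1 * a, (if p.1 = a then -1 else 1) * p.2)
  left_inv := by
    rintro ⟨t, ε⟩
    by_cases h : t = a <;> simp [h, conj_eq_iff_eq_conj_inv, ← mul_assoc]
  right_inv := by
    rintro ⟨t, ε⟩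
    by_cases h : t = a
    · simp [h]
    · simp [h, Ne.symm h, ← mul_assoc, inv_mul_eq_one]

theorem flipPerm_apply (a t : G) (ε : ℤˣ) :
    flipPerm a (t, ε) = (a * t * a⁻¹, (if t = a then -1 else 1) * ε) := rfl

theorem flipPerm_mul_pow_apply {a b : G} (ha : a⁻¹ = a) (hb : b⁻¹ = b) (k : ℕ) (t : G)
    (ε : ℤˣ) :
    ((flipPerm a * flipPerm b) ^ k) (t, ε) = ((a * b) ^ k * t * ((a * b) ^ k)⁻¹,
      (∏ j ∈ Finset.range (2 * k), if t = (b * a) ^ j * b then -1 else 1) * ε) := by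
  induction k generalizing t ε with
  | zero => simp
  | succ k ih =>
    have hshift (j : ℕ) : b⁻¹ * (a⁻¹ * ((b * a) ^ j * b) * a) * b = (b * a) ^ (j + 2) * b := by
      rw [ha, hb, pow_succ, pow_succ']
      simp only [mul_assoc]
    rw [pow_succ, Equiv.Perm.mul_apply, Equiv.Perm.mul_apply, flipPerm_apply, flipPerm_apply, ih]
    simp only [conj_eq_iff_eq_conj_inv, hshift]
    ext
    · simp only [pow_succ]
      group
    · rw [show 2 * (k + 1) = 2 * k + 1 + 1 by ring, Finset.prod_range_succ',
        Finset.prod_range_succ']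
      simp only [hb, zero_add, pow_zero, pow_one, one_mul, mul_assoc, add_assoc, Nat.reduceAdd]

theorem flipPerm_mul_pow_eq_one {a b : G} (ha : a⁻¹ = a) (hb : b⁻¹ = b) {m : ℕ}
    (hm : (a * b) ^ m = 1) : (flipPerm a * flipPerm b) ^ m = 1 := by
  have hm' : (b * a) ^ m = 1 := by rw [← ha, ← hb, ← mul_inv_rev, inv_pow, hm, inv_one]
  refine Equiv.ext fun ⟨t, ε⟩ => ?_
  -- the sign factors are `m`-periodic in `j`, so their product over `2 * m` terms is a square
  rw [flipPerm_mul_pow_apply ha hb, hm, two_mul, Finset.prod_range_add]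
  simp only [pow_add, hm', one_mul, Int.units_mul_self, inv_one, mul_one, Equiv.Perm.one_apply]

end FlipPerm

namespace CoxeterSystem

open scoped Classical

variable (cs : CoxeterSystem cm W)

noncomputable def titsRep : W →* Equiv.Perm (W × ℤˣ) :=
  cs.lift ⟨fun i => flipPerm (cs.simple i), fun i i' =>
    flipPerm_mul_pow_eq_one (cs.inv_simple i) (cs.inv_simple i') (cs.simple_mul_simple_pow i i')⟩

theorem titsRep_simple (i : ι) : cs.titsRep (cs.simple i) = flipPerm (cs.simple i) :=
  cs.lift_apply_simple _ i

theorem titsRep_wordProd_apply (ω : List ι) (t : W) (ε : ℤˣ) :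
    cs.titsRep (cs.wordProd ω) (t, ε) =
      (cs.wordProd ω * t * (cs.wordProd ω)⁻¹, (-1) ^ (cs.rightInvSeq ω).count t * ε) := by
  induction ω generalizing t ε with
  | nil => simp
  | cons i ω ih =>
    rw [wordProd_cons, map_mul, Equiv.Perm.mul_apply, ih, titsRep_simple, flipPerm_apply]
    ext
    · simp only [mul_inv_rev, inv_simple, mul_assoc]
    · simp only [rightInvSeq, List.count_cons, conj_eq_iff_eq_conj_inv, beq_iff_eq,
        eq_comm (a := t)]
      split_ifs <;> simp [pow_succ, mul_comm]

noncomputable def titsSign (w t : W) : ℤˣ := (cs.titsRep w (t, 1)).2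

theorem titsSign_wordProd (ω : List ι) (t : W) :
    cs.titsSign (cs.wordProd ω) t = (-1) ^ (cs.rightInvSeq ω).count t := by
  simp [titsSign, titsRep_wordProd_apply]

theorem titsRep_apply (w t : W) (ε : ℤˣ) :
    cs.titsRep w (t, ε) = (w * t * w⁻¹, cs.titsSign w t * ε) := by
  obtain ⟨ω, rfl⟩ := cs.wordProd_surjective w
  rw [titsRep_wordProd_apply, titsSign_wordProd]

theorem titsSign_mul (u v t : W) :
    cs.titsSign (u * v) t = cs.titsSign u (v * t * v⁻¹) * cs.titsSign v t := by
  have h := congrArg Prod.snd (cs.titsRep_apply (u * v) t 1)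
  rw [map_mul, Equiv.Perm.mul_apply, titsRep_apply, titsRep_apply] at h
  simpa using h.symm

theorem titsSign_self_of_isReflection {t : W} (ht : cs.IsReflection t) :
    cs.titsSign t t = -1 := by
  obtain ⟨p, i, rfl⟩ := ht
  have hconj : p⁻¹ * (p * cs.simple i * p⁻¹) * p⁻¹⁻¹ = cs.simple i := by group
  have hsimple : cs.titsSign (cs.simple i) (cs.simple i) = -1 := by
    simp [titsSign, titsRep_simple, flipPerm_apply]
  have hone : cs.titsSign 1 (p * cs.simple i * p⁻¹) = 1 := by simp [titsSign]
  have hcancel := cs.titsSign_mul p p⁻¹ (p * cs.simple i * p⁻¹)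
  rw [mul_inv_cancel, hone, hconj] at hcancel
  rw [titsSign_mul, hconj, titsSign_mul, mul_inv_cancel_right, hsimple, mul_right_comm, ← hcancel,
    one_mul]

theorem mem_rightInvSeq_of_isRightInversion (ω : List ι) {t : W}
    (ht : cs.IsRightInversion (cs.wordProd ω) t) : t ∈ cs.rightInvSeq ω := by
  by_contra hmem
  obtain ⟨τ, hτ, hτω⟩ := cs.exists_isReduced (cs.wordProd ω * t)
  have hsign : cs.titsSign (cs.wordProd τ) t = -1 := by
    rw [← hτω, titsSign_mul, mul_inv_cancel_right, titsSign_self_of_isReflection cs ht.1,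
      titsSign_wordProd, List.count_eq_zero_of_not_mem hmem]
    simp
  have hmemτ : t ∈ cs.rightInvSeq τ := by
    by_contra h
    rw [titsSign_wordProd, List.count_eq_zero_of_not_mem h] at hsign
    exact absurd hsign (by decide)
  have hlt := (cs.isRightInversion_of_mem_rightInvSeq hτ hmemτ).2
  rw [← hτω, mul_assoc, ht.1.mul_self, mul_one] at hlt
  exact absurd ht.2 (not_lt.mpr hlt.le)

theorem mem_leftInvSeq_of_isLeftInversion (ω : List ι) {t : W}
    (ht : cs.IsLeftInversion (cs.wordProd ω) t) : t ∈ cs.leftInvSeq ω := by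
  have h := cs.mem_rightInvSeq_of_isRightInversion ω.reverse
    (by rwa [wordProd_reverse, isRightInversion_inv_iff])
  rwa [rightInvSeq_reverse, List.mem_reverse] at h

theorem titsSign_eq_neg_one_of_isRightInversion {w t : W} (ht : cs.IsRightInversion w t) :
    cs.titsSign w t = -1 := by
  obtain ⟨ω, hω, rfl⟩ := cs.exists_isReduced w
  rw [titsSign_wordProd, List.count_eq_one_of_mem hω.nodup_rightInvSeq
    (cs.mem_rightInvSeq_of_isRightInversion ω ht), pow_one]

theorem isRightInversion_iff_titsSign {w t : W} (ht : cs.IsReflection t) :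
    cs.IsRightInversion w t ↔ cs.titsSign w t = -1 := by
  refine ⟨cs.titsSign_eq_neg_one_of_isRightInversion, fun hsign => by_contra fun hinv => ?_⟩
  have h := cs.titsSign_eq_neg_one_of_isRightInversion (ht.isRightInversion_mul_left_iff.mpr hinv)
  rw [titsSign_mul, mul_inv_cancel_right, titsSign_self_of_isReflection cs ht, hsign] at h
  exact absurd h (by decide)

theorem isLeftInversion_iff_titsSign {w t : W} (ht : cs.IsReflection t) :
    cs.IsLeftInversion w t ↔ cs.titsSign w⁻¹ t = -1 := by
  rw [← isRightInversion_inv_iff, isRightInversion_iff_titsSign cs ht]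

theorem sepElem_mul_iff {r : W} (hr : cs.IsReflection r) (c w : W) :
    SepElem cs r c (c * w) ↔ cs.IsLeftInversion w (c⁻¹ * r * c) := by
  have hleft (x : W) : cs.length (r * x) < cs.length x ↔ cs.titsSign x⁻¹ r = -1 :=
    (and_iff_right hr).symm.trans (cs.isLeftInversion_iff_titsSign hr)
  change Xor _ _ ↔ _
  rw [hleft, hleft, isLeftInversion_iff_titsSign cs (by simpa using hr.conj c⁻¹),
    mul_inv_rev, titsSign_mul, inv_inv]
  rcases Int.units_eq_one_or (cs.titsSign c⁻¹ r) with h | h <;>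
    rcases Int.units_eq_one_or (cs.titsSign w⁻¹ (c⁻¹ * r * c)) with h' | h' <;>
    simp [h, h']

end CoxeterSystem

theorem WLe.trans {cs : CoxeterSystem cm W} {a b c : W} (hab : WLe cs a b) (hbc : WLe cs b c) :
    WLe cs a c := by
  have h1 := cs.length_mul_le (a⁻¹ * b) (b⁻¹ * c)
  have h2 := cs.length_mul_le a (a⁻¹ * c)
  simp only [mul_assoc, mul_inv_cancel_left] at h1 h2
  unfold WLe at *
  omega

theorem WLe.antisymm {cs : CoxeterSystem cm W} {a b : W} (hab : WLe cs a b) (hba : WLe cs b a) :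
    a = b := by
  have h : cs.length (a⁻¹ * b) = 0 := by
    have := cs.length_inv (a⁻¹ * b)
    rw [mul_inv_rev, inv_inv] at this
    unfold WLe at *
    omega
  exact inv_mul_eq_one.mp (cs.length_eq_zero_iff.mp h)

theorem IsGarsideProjection.eq_of_wle {cs : CoxeterSystem cm W} {B : Set W} {π : W → W}
    (hπ : IsGarsideProjection cs B π) {x y : W} (hyx : WLe cs y x) (hxy : WLe cs (π x) y) :
    π y = π x :=
  ((hπ y).2.2 _ fun b hb => (hπ x).2.1 b ⟨hb.1, hb.2.trans hyx⟩).antisymm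
    ((hπ y).2.1 _ ⟨(hπ x).1, hxy⟩)

theorem exists_eq_conj_simple_of_not_wle {cs : CoxeterSystem cm W} {b x t : W}
    (hbx : WLe cs b x) (ht : cs.IsReflection t) (hlen : cs.length (t * x) + 1 = cs.length x)
    (hb : ¬ WLe cs b (t * x)) :
    ∃ p : W, ∃ i : ι, cs.length p < cs.length b ∧ t = p * cs.simple i * p⁻¹ := by
  obtain ⟨ωb, hωb, rfl⟩ := cs.exists_isReduced b
  obtain ⟨ωc, hωc, hc⟩ := cs.exists_isReduced ((cs.wordProd ωb)⁻¹ * x)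
  have hx : x = cs.wordProd (ωb ++ ωc) := by rw [cs.wordProd_append, ← hc, mul_inv_cancel_left]
  have hxlen : cs.length x = ωb.length + ωc.length := by
    rw [← hωb.eq, ← hωc.eq, ← hc]
    exact hbx.symm
  have hinv : cs.IsLeftInversion (cs.wordProd (ωb ++ ωc)) t := ⟨ht, by rw [← hx]; omega⟩
  obtain ⟨j, hj, hjt⟩ := List.mem_iff_getElem.mp (cs.mem_leftInvSeq_of_isLeftInversion _ hinv)
  have hj' : j < ωb.length + ωc.length := by simpa using hj
  by_cases hjb : j < ωb.length
  · refine ⟨cs.wordProd (ωb.take j), ωb[j], ?_, ?_⟩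
    · calc cs.length (cs.wordProd (ωb.take j)) ≤ (ωb.take j).length := cs.length_wordProd_le _
        _ < ωb.length := by simp [hjb]
        _ = _ := hωb.eq.symm
    · rw [← hjt, cs.getElem_leftInvSeq _ _ (by simpa using hj),
        List.take_append_of_le_length hjb.le, List.getElem_append_left hjb]
  · refine absurd ?_ hb
    have htx : t * x = cs.wordProd ωb * cs.wordProd (ωc.eraseIdx (j - ωb.length)) := by
      rw [hx, ← hjt, ← List.getD_eq_getElem _ 1, cs.getD_leftInvSeq_mul_wordProd,
        List.eraseIdx_append_of_length_le (not_lt.mp hjb), cs.wordProd_append]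
    have hdel := cs.length_wordProd_le (ωc.eraseIdx (j - ωb.length))
    rw [List.length_eraseIdx_of_lt (by omega)] at hdel
    have hsub := cs.length_mul_le (cs.wordProd ωb) (cs.wordProd (ωc.eraseIdx (j - ωb.length)))
    have hb_len := hωb.eq
    rw [htx] at hlen
    rw [WLe, htx, inv_mul_cancel_left]
    omega

theorem mClose_conj {cs : CoxeterSystem cm W} {t p : W} {i : ι}
    (ht : t = p * cs.simple i * p⁻¹) (g : W) : MClose cs (cs.length p) g (g * t * g⁻¹) := by
  classical
  obtain ⟨ρ, hρ, rfl⟩ := cs.exists_isReduced p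
  refine ⟨((cs.leftInvSeq ρ).map fun r => g * r * g⁻¹).toFinset, ?_, fun r hr hsep => ?_⟩
  · calc _ ≤ ((cs.leftInvSeq ρ).map fun r => g * r * g⁻¹).length := List.toFinset_card_le _
      _ = cs.length (cs.wordProd ρ) := by simp [hρ.eq]
  · have hwall : g * t * g⁻¹ * (g * cs.wordProd ρ) = g * cs.wordProd ρ * cs.simple i := by
      rw [ht]; group
    have hinv := (cs.sepElem_mul_iff hr g _).mp (hsep _ ⟨i, hwall⟩)
    rw [List.mem_toFinset, List.mem_map]
    exact ⟨_, cs.mem_leftInvSeq_of_isLeftInversion ρ hinv, by group⟩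

theorem wall_close_of_proj_ne_general (cs : CoxeterSystem cm W)
    (B : Set W)
    (piB : W → W) (hpi : IsGarsideProjection cs B piB)
    (M : ℕ) (hM : IsGreatest (cs.length '' B) M)
    (g : W) (s : ι) (hlen : cs.length g < cs.length (cs.simple s * g))
    (hne : piB g⁻¹ ≠ piB (cs.simple s * g)⁻¹) :
    MClose cs M (cs.simple s * g) (cs.simple s) := by
  set x := (cs.simple s * g)⁻¹
  set t := g⁻¹ * cs.simple s * g
  have htx : t * x = g⁻¹ := by simp only [t, x]; group
  have hxlen : cs.length x = cs.length g⁻¹ + 1 := by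
    rw [cs.length_inv, cs.length_inv]
    rcases cs.length_simple_mul g s with h | h <;> omega
  have hgx : WLe cs g⁻¹ x := by
    rw [WLe, show g⁻¹⁻¹ * x = cs.simple s by simp [x], cs.length_simple, hxlen]
  have hbx : WLe cs (piB x) x := (hpi x).2.2 _ fun _ hb => hb.2
  have hnot : ¬ WLe cs (piB x) (t * x) := fun h => hne (hpi.eq_of_wle hgx (htx ▸ h))
  obtain ⟨p, i, hp, hpt⟩ := exists_eq_conj_simple_of_not_wle hbx ⟨g⁻¹, s, by simp only [t, inv_inv]⟩
    (by rw [htx, hxlen]) hnot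
  obtain ⟨F, hF, hsep⟩ := mClose_conj hpt (cs.simple s * g)
  refine ⟨F, hF.trans (hp.le.trans (hM.2 ⟨_, (hpi x).1, rfl⟩)), ?_⟩
  simpa [t, mul_assoc] using hsep

/-- If `B` is a finite Garside shadow with `M = max{ℓ(b) : b ∈ B}`,
`ℓ(sg) > ℓ(g)` and `π_B(g⁻¹) ≠ π_B((sg)⁻¹)`, then the wall of `s` is `M`-close to `sg`. -/
theorem wall_close_of_proj_ne [Finite ι] (cs : CoxeterSystem cm W)
    (B : Set W) (hB : IsGarsideShadow cs B) (hBfin : B.Finite)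
    (piB : W → W) (hpi : IsGarsideProjection cs B piB)
    (M : ℕ) (hM : IsGreatest (cs.length '' B) M)
    (g : W) (s : ι) (hlen : cs.length g < cs.length (cs.simple s * g))
    (hne : piB g⁻¹ ≠ piB (cs.simple s * g)⁻¹) :
    MClose cs M (cs.simple s * g) (cs.simple s) :=
  wall_close_of_proj_ne_general cs B piB hpi M hM g s hlen hne
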